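/- Let (G, V^∞, T, k) be an instance of OddMultiwayNodeCut where G is a directed acyclic graph, T ⊆ V^∞ ⊆ V(G), and let Z ⊆ V(G) \ T. Let (G', V'^∞) := torso(G, V^∞, Z). Then the instance (G, V^∞, T, k) admits an odd multiway cut of size at most k that is disjoint from Z if and only if the instance (G', V'^∞, T, k) admits an odd multiway cut of size at most k. -/

import Mathlib

/-- A (simple) directed path in the directed graph `G`, represented as a nonempty
list of pairwise distinct vertices in which every consecutive pair is an edge of `G`. -/
def IsPath {V : Type*} (G : V → V → Prop) (p : List V) : Prop :=
  p ≠ [] ∧ p.Chain' G ∧ p.Nodup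

/-- `p` is a directed path from `u` to `v` in `G`. -/
def IsPathFrom {V : Type*} (G : V → V → Prop) (u v : V) (p : List V) : Prop :=
  IsPath G p ∧ p.head? = some u ∧ p.getLast? = some v

/-- The length (number of edges) of a path, given as its list of vertices. -/
def pathLen {V : Type*} (p : List V) : ℕ := p.length - 1

/-- The list of directed edges traversed by a path. -/
def edgesOf {V : Type*} (p : List V) : List (V × V) := p.zip p.tail

/-- A directed graph is acyclic (a DAG) if no vertex lies on a directed cycle. -/
def Acyclic {V : Type*} (G : V → V → Prop) : Prop :=
  ∀ v, ¬ Relation.TransGen G v v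

/-- The graph obtained from `G` by deleting the vertex set `M`. -/
def delV {V : Type*} (G : V → V → Prop) (M : Set V) : V → V → Prop :=
  fun a b => G a b ∧ a ∉ M ∧ b ∉ M

/-- All internal vertices of the path `p` (all vertices except the two endpoints)
lie in `Z`. -/
def internalsIn {V : Type*} (Z : Set V) (p : List V) : Prop :=
  ∀ x ∈ (p.drop 1).dropLast, x ∈ Z

/-- The parity-preserving torso of `G` with respect to `Z`.  Its vertices are
`Sum.inl v` for the original vertices `v ∈ V(G) \ Z`, together with new vertices
`Sum.inr (u, v)` playing the role of `x_{uv}`.  For every `u, v ∉ Z` joined in `G`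
by an odd path whose internal vertices all lie in `Z` there is an edge `u → v`
(this includes the edges of `G \ Z`, which are odd paths with no internal
vertices), and for every pair of distinct `u, v ∉ Z` joined in `G` by an even
path whose internal vertices all lie in `Z` there are edges `u → x_{uv} → v`. -/
def torsoGraph {V : Type*} (G : V → V → Prop) (Z : Set V) :
    V ⊕ V × V → V ⊕ V × V → Prop
  | Sum.inl u, Sum.inl v => u ∉ Z ∧ v ∉ Z ∧
      ∃ p, IsPathFrom G u v p ∧ Odd (pathLen p) ∧ internalsIn Z p
  | Sum.inl u, Sum.inr w => w.1 = u ∧ u ∉ Z ∧ w.2 ∉ Z ∧ u ≠ w.2 ∧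
      ∃ p, IsPathFrom G u w.2 p ∧ Even (pathLen p) ∧ internalsIn Z p
  | Sum.inr w, Sum.inl v => w.2 = v ∧ w.1 ∉ Z ∧ v ∉ Z ∧ w.1 ≠ v ∧
      ∃ p, IsPathFrom G w.1 v p ∧ Even (pathLen p) ∧ internalsIn Z p
  | Sum.inr _, Sum.inr _ => False

/-- The protected vertex set of the parity-preserving torso: the surviving old
protected vertices together with all the new vertices `x_{uv}`. -/
def torsoProtected {V : Type*} (Vinf Z : Set V) : Set (V ⊕ V × V) :=
  Sum.inl '' (Vinf \ Z) ∪ Set.range Sum.inr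

/-- An odd multiway (node) cut for the instance `(G, Vinf, T)`: a set of
non-protected vertices meeting every odd `T`-path of `G`. -/
def OddMWC {V : Type*} (G : V → V → Prop) (Vinf T M : Set V) : Prop :=
  M ⊆ Vinfᶜ ∧
  ∀ u ∈ T, ∀ v ∈ T, ∀ p, IsPathFrom G u v p → Odd (pathLen p) → ∃ z ∈ p, z ∈ M

/-!
A walk in the torso expands into a walk in `G` of the same parity: each torso edge `u → v`, and
each detour `u → x_{uv} → v`, is replaced by the path through `Z` it stands for. Since `G` is
acyclic, the expanded walk is a path. Conversely, a path of `G` between vertices outside `Z`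
splits at its vertices outside `Z` into segments with all internal vertices in `Z`, and each
segment is a torso edge or a detour of the same parity. Both translations keep the vertices
outside `Z`, and the new vertices `x_{uv}` are protected, so cuts disjoint from `Z` correspond.
-/

lemma Nat.ModEq.odd_iff {m n : ℕ} (h : m ≡ n [MOD 2]) : Odd m ↔ Odd n := by
  rw [Nat.odd_iff, Nat.odd_iff, show m % 2 = n % 2 from h]

section Walks

variable {V : Type*} {G : V → V → Prop} {u v w x : V} {p q : List V}

def IsWalkFrom (G : V → V → Prop) (u v : V) (p : List V) : Prop :=
  p.IsChain G ∧ p.head? = some u ∧ p.getLast? = some v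

lemma List.IsChain.nodup_of_acyclic (hG : Acyclic G) (h : p.IsChain G) : p.Nodup :=
  ((h.imp fun _ _ => Relation.TransGen.single).pairwise).imp
    fun {a _} hab heq => by subst heq; exact hG a hab

namespace IsWalkFrom

lemma ne_nil (h : IsWalkFrom G u v p) : p ≠ [] := by
  rintro rfl
  simp [IsWalkFrom] at h

lemma singleton (G : V → V → Prop) (u : V) : IsWalkFrom G u u [u] :=
  ⟨List.isChain_singleton u, rfl, rfl⟩

lemma cons (huv : G u v) (h : IsWalkFrom G v w p) : IsWalkFrom G u w (u :: p) := by
  obtain ⟨hc, hh, hl⟩ := h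
  refine ⟨hc.cons fun y hy => ?_, rfl, ?_⟩
  · rw [hh, Option.mem_some_iff] at hy
    exact hy ▸ huv
  · rw [List.getLast?_cons, hl]
    rfl

lemma append (hq : IsWalkFrom G u v q) (hp : IsWalkFrom G v w (v :: p)) :
    IsWalkFrom G u w (q ++ p) := by
  obtain ⟨hqc, hqh, hql⟩ := hq
  obtain ⟨hpc, -, hpl⟩ := hp
  have hq : q ≠ [] := by rintro rfl; simp at hqh
  refine ⟨hqc.append (List.isChain_cons.mp hpc).2 ?_, ?_, ?_⟩
  · intro a ha b hb
    rw [hql, Option.mem_some_iff] at ha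
    exact ha ▸ (List.isChain_cons.mp hpc).1 b hb
  · rwa [List.head?_append_of_ne_nil _ hq]
  · rw [List.getLast?_append, hql]
    rw [List.getLast?_cons] at hpl
    cases h : p.getLast? <;> simp_all

lemma append_tail (hq : IsWalkFrom G u v q) (hp : IsWalkFrom G v w p) :
    IsWalkFrom G u w (q ++ p.tail) := by
  obtain ⟨x, t, rfl⟩ := List.exists_cons_of_ne_nil hp.ne_nil
  obtain rfl : x = v := by simpa using hp.2.1
  exact hq.append hp

lemma of_cons_cons (h : IsWalkFrom G u w (u :: v :: p)) :
    G u v ∧ IsWalkFrom G v w (v :: p) :=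
  ⟨(List.isChain_cons_cons.mp h.1).1, (List.isChain_cons_cons.mp h.1).2, rfl, h.2.2⟩

lemma of_append_cons (h : IsWalkFrom G u w (q ++ v :: p)) :
    IsWalkFrom G u v (q ++ [v]) ∧ IsWalkFrom G v w (v :: p) := by
  obtain ⟨hc, hh, hl⟩ := h
  refine ⟨⟨?_, ?_, by simp⟩, ⟨hc.right_of_append, rfl, ?_⟩⟩
  · rw [← List.singleton_append, ← List.append_assoc] at hc
    exact hc.left_of_append
  · cases q <;> simpa using hh
  · rwa [List.getLast?_append_of_ne_nil _ (List.cons_ne_nil v p)] at hl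

lemma isPathFrom (hG : Acyclic G) (h : IsWalkFrom G u v p) : IsPathFrom G u v p :=
  ⟨⟨h.ne_nil, h.1, h.1.nodup_of_acyclic hG⟩, h.2⟩

lemma eq_or_eq_or_mem_of_mem (h : IsWalkFrom G u v p) (hx : x ∈ p) :
    x = u ∨ x = v ∨ x ∈ (p.drop 1).dropLast := by
  obtain ⟨-, hh, hl⟩ := h
  obtain ⟨a, r, rfl⟩ := List.exists_cons_of_ne_nil (List.ne_nil_of_mem hx)
  obtain rfl : a = u := by simpa using hh
  rcases List.mem_cons.mp hx with rfl | hxr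
  · exact Or.inl rfl
  by_cases hxv : x = v
  · exact Or.inr (Or.inl hxv)
  have hr : r.getLast? = some v := by
    rw [List.getLast?_cons, List.getLast?_eq_some_getLast (List.ne_nil_of_mem hxr)] at hl
    rw [List.getLast?_eq_some_getLast (List.ne_nil_of_mem hxr)]
    simpa using hl
  exact Or.inr (Or.inr (List.mem_dropLast_of_mem_of_ne_getLast? hxr (by simpa [hr] using hxv)))

end IsWalkFrom

lemma IsPathFrom.isWalkFrom (h : IsPathFrom G u v p) : IsWalkFrom G u v p :=
  ⟨h.1.2.1, h.2⟩

lemma pathLen_append (hq : q ≠ []) (x : V) (p : List V) :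
    pathLen (q ++ p) = pathLen q + pathLen (x :: p) := by
  have := List.length_pos_iff.mpr hq
  simp only [pathLen, List.length_append, List.length_cons]
  omega

lemma pathLen_cons (x : V) (p : List V) (hp : p ≠ []) : pathLen (x :: p) = pathLen p + 1 := by
  have := List.length_pos_iff.mpr hp
  simp only [pathLen, List.length_cons]
  omega

lemma pathLen_append_tail (hq : q ≠ []) (hp : p ≠ []) :
    pathLen (q ++ p.tail) = pathLen q + pathLen p := by
  obtain ⟨x, t, rfl⟩ := List.exists_cons_of_ne_nil hp
  exact pathLen_append hq x t

lemma mem_append_tail_of_internalsIn {Z : Set V} {b : V} (hq : IsWalkFrom G u b q)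
    (hqZ : internalsIn Z q) (hp : IsWalkFrom G b v p) (hx : x ∈ q ++ p.tail) :
    x ∈ Z ∨ x = u ∨ x ∈ p := by
  rcases List.mem_append.mp hx with hxq | hxp
  · rcases hq.eq_or_eq_or_mem_of_mem hxq with rfl | rfl | hx
    · exact Or.inr (Or.inl rfl)
    · exact Or.inr (Or.inr (List.mem_of_mem_head? hp.2.1))
    · exact Or.inl (hqZ x hx)
  · exact Or.inr (Or.inr (List.mem_of_mem_tail hxp))

end Walks

section Torso

open Sum

variable {V : Type*} {G : V → V → Prop} {Z : Set V}

theorem exists_walk_of_torso_walk :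
    ∀ {p' : List (V ⊕ V × V)} {u v : V}, IsWalkFrom (torsoGraph G Z) (inl u) (inl v) p' →
      ∃ p, IsWalkFrom G u v p ∧ pathLen p ≡ pathLen p' [MOD 2] ∧
        ∀ x ∈ p, x ∈ Z ∨ inl x ∈ p'
  | [], _, _, h => absurd rfl h.ne_nil
  | [_], u, v, h => by
    obtain ⟨-, hu, hv⟩ := h
    obtain rfl : u = v := by simp_all
    exact ⟨[u], .singleton G u, rfl, by simp_all⟩
  | inr _ :: _, _, _, h => by simp [IsWalkFrom] at h
  | inl _ :: inr _ :: [], _, _, h => by simp [IsWalkFrom] at h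
  | inl _ :: inr _ :: inr _ :: _, _, _, h => by
    simp [IsWalkFrom, torsoGraph] at h
  | inl a :: inl b :: rest, u, v, h => by
    obtain rfl : a = u := by simpa [IsWalkFrom] using h.2.1
    obtain ⟨⟨-, -, q, hq, hqodd, hqZ⟩, hrest⟩ := h.of_cons_cons
    obtain ⟨p, hp, hpar, hpmem⟩ := exists_walk_of_torso_walk hrest
    refine ⟨q ++ p.tail, hq.isWalkFrom.append_tail hp, ?_, fun x hx => ?_⟩
    · rw [pathLen_append_tail hq.isWalkFrom.ne_nil hp.ne_nil, pathLen_cons _ _ (by simp),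
        add_comm]
      exact hpar.add (Nat.odd_iff.mp hqodd)
    · rcases mem_append_tail_of_internalsIn hq.isWalkFrom hqZ hp hx with hx | rfl | hx
      · exact Or.inl hx
      · exact Or.inr List.mem_cons_self
      · exact (hpmem x hx).imp_right (List.mem_cons_of_mem _)
  | inl a :: inr w :: inl b :: rest, u, v, h => by
    obtain rfl : a = u := by simpa [IsWalkFrom] using h.2.1
    obtain ⟨⟨rfl, -, -, -, q, hq, hqeven, hqZ⟩, hrest⟩ := h.of_cons_cons
    obtain ⟨⟨rfl, -⟩, hrest⟩ := hrest.of_cons_cons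
    obtain ⟨p, hp, hpar, hpmem⟩ := exists_walk_of_torso_walk hrest
    refine ⟨q ++ p.tail, hq.isWalkFrom.append_tail hp, ?_, fun x hx => ?_⟩
    · rw [pathLen_append_tail hq.isWalkFrom.ne_nil hp.ne_nil, pathLen_cons _ _ (by simp),
        pathLen_cons _ _ (by simp), add_assoc, add_comm]
      exact hpar.add (Nat.even_iff.mp hqeven)
    · rcases mem_append_tail_of_internalsIn hq.isWalkFrom hqZ hp hx with hx | rfl | hx
      · exact Or.inl hx
      · exact Or.inr List.mem_cons_self
      · exact (hpmem x hx).imp_right (List.mem_cons_of_mem _ ∘ List.mem_cons_of_mem _)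

theorem exists_torso_path_cons_of_segment {u x v : V} {q : List V} {p' : List (V ⊕ V × V)}
    (hu : u ∉ Z) (hx : x ∉ Z) (hux : u ≠ x) (hq : IsPathFrom G u x q) (hqZ : internalsIn Z q)
    (hp' : IsWalkFrom (torsoGraph G Z) (inl x) (inl v) p') (hnd : p'.Nodup)
    (hfresh : inl u ∉ p' ∧ inr (u, x) ∉ p') :
    ∃ p'', IsWalkFrom (torsoGraph G Z) (inl u) (inl v) p'' ∧ p''.Nodup ∧
      pathLen p'' ≡ pathLen q + pathLen p' [MOD 2] ∧
      ∀ y ∈ p'', y = inl u ∨ y = inr (u, x) ∨ y ∈ p' := by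
  have hlen : ∀ a, pathLen (a :: p') = pathLen p' + 1 := fun a => pathLen_cons a p' hp'.ne_nil
  rcases Nat.even_or_odd (pathLen q) with heven | hodd
  · refine ⟨inl u :: inr (u, x) :: p', (hp'.cons ?_).cons ?_, by simp [hnd, hfresh], ?_,
      fun y hy => by simpa using hy⟩
    · exact ⟨rfl, hu, hx, hux, q, hq, heven, hqZ⟩
    · exact ⟨rfl, hu, hx, hux, q, hq, heven, hqZ⟩
    · rw [pathLen_cons _ _ (List.cons_ne_nil _ _), hlen]
      have := Nat.even_iff.mp heven
      unfold Nat.ModEq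
      omega
  · refine ⟨inl u :: p', hp'.cons ?_, by simp [hnd, hfresh], ?_,
      fun y hy => (List.mem_cons.mp hy).imp_right Or.inr⟩
    · exact ⟨hu, hx, q, hq, hodd, hqZ⟩
    · rw [hlen]
      have := Nat.odd_iff.mp hodd
      unfold Nat.ModEq
      omega

/-- `s` is the run of `Z`-vertices already read after the last vertex `u ∉ Z`; the induction is
on the unread part `l` of the path. -/
theorem exists_torso_path_of_cons_append {v : V} (hv : v ∉ Z) :
    ∀ (l : List V) {u : V} {s : List V}, u ∉ Z → (∀ x ∈ s, x ∈ Z) →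
      IsWalkFrom G u v (u :: s ++ l) → (u :: s ++ l).Nodup →
      ∃ p' : List (V ⊕ V × V), IsWalkFrom (torsoGraph G Z) (inl u) (inl v) p' ∧ p'.Nodup ∧
        pathLen p' ≡ pathLen (u :: s ++ l) [MOD 2] ∧
        (∀ x, inl x ∈ p' → x ∈ u :: s ++ l ∧ x ∉ Z) ∧
        (∀ w, inr w ∈ p' → w.1 ∈ u :: s ++ l)
  | [], u, s, hu, hs, hp, _ => by
    obtain rfl : s = [] := by
      rcases List.eq_nil_or_concat s with rfl | ⟨s', y, rfl⟩
      · rfl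
      · obtain rfl : y = v := by
          have h := hp.2.2
          rw [List.append_nil, List.concat_eq_append, List.getLast?_cons,
            List.getLast?_concat] at h
          simpa using h
        exact absurd (hs y (by simp)) hv
    obtain rfl : u = v := by simpa using hp.2.2
    exact ⟨[inl u], .singleton _ _, List.nodup_singleton _, rfl, by simp [hu], by simp⟩
  | x :: l, u, s, hu, hs, hp, hnd => by
    by_cases hx : x ∈ Z
    · simpa using exists_torso_path_of_cons_append hv l hu (s := s ++ [x])
        (by simpa [or_imp, forall_and, hx] using hs) (by simpa using hp) (by simpa using hnd)
    obtain ⟨hq, hrest⟩ := hp.of_append_cons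
    have hqnd : (u :: s ++ [x] ++ l).Nodup := by simpa using hnd
    have hqpath : IsPathFrom G u x (u :: s ++ [x]) :=
      ⟨⟨hq.ne_nil, hq.1, hqnd.sublist (List.sublist_append_left _ _)⟩, hq.2⟩
    have hqZ : internalsIn Z (u :: s ++ [x]) := by simpa [internalsIn] using hs
    obtain ⟨p', hp', hnd', hpar, hinl, hinr⟩ :=
      exists_torso_path_of_cons_append hv l (s := []) hx (by simp) hrest
        (List.nodup_append.mp hnd).2.1
    simp only [List.cons_append, List.nil_append] at hpar hinl hinr
    have hux : u ∉ x :: l := fun h => (List.nodup_cons.mp hnd).1 (List.mem_append_right _ h)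
    obtain ⟨p'', hp'', hnd'', hpar'', hmem⟩ := exists_torso_path_cons_of_segment hu hx
      (fun h => hux (h ▸ List.mem_cons_self)) hqpath hqZ hp' hnd'
      ⟨fun h => hux (hinl u h).1, fun h => hux (hinr _ h)⟩
    have hsub : ∀ y ∈ x :: l, y ∈ u :: s ++ x :: l :=
      fun y h => List.mem_cons_of_mem _ (List.mem_append_right _ h)
    refine ⟨p'', hp'', hnd'', ?_, fun y hy => ?_, fun w hw => ?_⟩
    · have hlen : pathLen (u :: s ++ x :: l) = pathLen (u :: s ++ [x]) + pathLen (x :: l) := by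
        simpa using pathLen_append (q := u :: s ++ [x]) (by simp) x l
      rw [hlen]
      exact hpar''.trans (hpar.add_left _)
    · rcases hmem _ hy with h | h | h
      · obtain rfl := inl_injective h
        exact ⟨List.mem_cons_self, hu⟩
      · cases h
      · exact (hinl y h).imp_left (hsub y)
    · rcases hmem _ hw with h | h | h
      · cases h
      · obtain rfl := inr_injective h
        exact List.mem_cons_self
      · exact hsub _ (hinr w h)

theorem exists_torso_path_of_isPathFrom {u v : V} {p : List V} (hp : IsPathFrom G u v p)
    (hu : u ∉ Z) (hv : v ∉ Z) :
    ∃ p', IsPathFrom (torsoGraph G Z) (inl u) (inl v) p' ∧ pathLen p' ≡ pathLen p [MOD 2] ∧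
      ∀ x, inl x ∈ p' → x ∈ p ∧ x ∉ Z := by
  obtain ⟨a, l, rfl⟩ := List.exists_cons_of_ne_nil hp.1.1
  obtain rfl : a = u := by simpa using hp.2.1
  obtain ⟨p', hp', hnd', hpar, hinl, -⟩ :=
    exists_torso_path_of_cons_append hv l (s := []) hu (by simp) hp.isWalkFrom hp.1.2.2
  exact ⟨p', ⟨⟨hp'.ne_nil, hp'.1, hnd'⟩, hp'.2⟩, hpar, hinl⟩

theorem OddMWC.torso_image {Vinf T M : Set V} (hG : Acyclic G) (hM : OddMWC G Vinf T M)
    (hMZ : Disjoint M Z) :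
    OddMWC (torsoGraph G Z) (torsoProtected Vinf Z) (inl '' T) (inl '' M) := by
  obtain ⟨hMsub, hMhit⟩ := hM
  refine ⟨?_, ?_⟩
  · rintro _ ⟨m, hm, rfl⟩ (⟨y, hy, hym⟩ | ⟨w, hw⟩)
    · obtain rfl := inl_injective hym
      exact hMsub hm hy.1
    · cases hw
  · rintro _ ⟨u, hu, rfl⟩ _ ⟨v, hv, rfl⟩ p' hp' hodd
    obtain ⟨p, hp, hpar, hpmem⟩ := exists_walk_of_torso_walk hp'.isWalkFrom
    obtain ⟨z, hzp, hzM⟩ := hMhit u hu v hv p (hp.isPathFrom hG)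
      (hpar.odd_iff.mpr hodd)
    exact ⟨inl z, (hpmem z hzp).resolve_left (Set.disjoint_left.mp hMZ hzM), z, hzM, rfl⟩

/-- A torso cut may contain the isolated vertices `inl z`, `z ∈ Z`; they are discarded. -/
theorem OddMWC.of_torso {Vinf T : Set V} {M' : Set (V ⊕ V × V)} (hZ : Z ⊆ Tᶜ)
    (hM' : OddMWC (torsoGraph G Z) (torsoProtected Vinf Z) (inl '' T) M') :
    OddMWC G Vinf T (inl ⁻¹' M' \ Z) := by
  obtain ⟨hM'sub, hM'hit⟩ := hM'
  refine ⟨fun x hx hxV => hM'sub hx.1 (Or.inl ⟨x, ⟨hxV, hx.2⟩, rfl⟩), ?_⟩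
  intro u hu v hv p hp hodd
  obtain ⟨p', hp', hpar, hinl⟩ := exists_torso_path_of_isPathFrom hp (hZ · hu) (hZ · hv)
  obtain ⟨_ | w, hzp', hzM'⟩ := hM'hit _ ⟨u, hu, rfl⟩ _ ⟨v, hv, rfl⟩ p' hp'
    (hpar.odd_iff.mpr hodd)
  · obtain ⟨hzp, hzZ⟩ := hinl _ hzp'
    exact ⟨_, hzp, hzM', hzZ⟩
  · exact absurd (Or.inr ⟨w, rfl⟩) (hM'sub hzM')

end Torso

theorem torso_solution_equiv {V : Type*} [Fintype V] (G : V → V → Prop)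
    (hG : Acyclic G) (Vinf T Z : Set V) (hZ : Z ⊆ Tᶜ) (k : ℕ) :
    (∃ M : Set V, OddMWC G Vinf T M ∧ Disjoint M Z ∧ M.ncard ≤ k) ↔
    (∃ M' : Set (V ⊕ V × V),
      OddMWC (torsoGraph G Z) (torsoProtected Vinf Z) (Sum.inl '' T) M' ∧
      M'.ncard ≤ k) := by
  constructor
  · rintro ⟨M, hM, hMZ, hMk⟩
    exact ⟨_, hM.torso_image hG hMZ,
      (Set.ncard_image_of_injective M Sum.inl_injective).trans_le hMk⟩
  · rintro ⟨M', hM', hM'k⟩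
    refine ⟨_, hM'.of_torso hZ, Set.disjoint_sdiff_left, le_trans ?_ hM'k⟩
    exact Set.ncard_le_ncard_of_injOn Sum.inl (fun x hx => hx.1) Sum.inl_injective.injOn
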